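/- arXiv:0711.4169 — 4 statements merged into one kernel-verified Lean document; each statement's English description precedes it below -/
import Mathlib

section
/- There is no subgroup W of GL₂(ℂ) such that W has order 48, the center of W has order 2, and W is generated by a conjugacy class of W consisting of exactly six reflections. -/
open Matrix
abbrev M2 := Matrix (Fin 2) (Fin 2) ℂ

lemma refl_entries (R : M2) (h2 : R * R = 1) (hd : R.det = -1) :
    R 1 1 = -R 0 0 ∧ R 0 0 * R 0 0 + R 0 1 * R 1 0 = 1 := by
  rw [det_fin_two] at hd
  have e00 := congrFun (congrFun h2 0) 0
  have e01 := congrFun (congrFun h2 0) 1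
  have e10 := congrFun (congrFun h2 1) 0
  have e11 := congrFun (congrFun h2 1) 1
  simp [Matrix.mul_apply, Fin.sum_univ_two, Matrix.one_apply] at e00 e01 e10 e11
  constructor
  · -- R 1 1 = - R 0 0
    by_contra h
    have hσ : R 0 0 + R 1 1 ≠ 0 := fun hs => h (by linear_combination hs)
    have hq : R 0 1 = 0 := by
      rcases mul_eq_zero.mp (show R 0 1 * (R 0 0 + R 1 1) = 0 by linear_combination e01) with h'|h'
      exacts [h', absurd h' hσ]
    have hs' : R 1 0 = 0 := by
      rcases mul_eq_zero.mp (show R 1 0 * (R 0 0 + R 1 1) = 0 by linear_combination e10) with h'|h'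
      exacts [h', absurd h' hσ]
    have hpt : (R 0 0 - R 1 1) * (R 0 0 + R 1 1) = 0 := by
      linear_combination e00 - e11
    rcases mul_eq_zero.mp hpt with h'|h'
    · -- R00 = R11, det = R00^2 = 1 vs -1
      have h2' : (2:ℂ) = 0 := by linear_combination hd - e00 + (R 0 0) * h' + 2 * (R 0 1) * hs'
      norm_num at h2'
    · exact hσ h'
  · exact e00

lemma span_mul (R : M2) (h2 : R * R = 1) (α β γ δ : ℂ) :
    (α • 1 + β • R) * (γ • 1 + δ • R) = (α*γ + β*δ) • 1 + (α*δ + β*γ) • R := by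
  simp only [add_mul, mul_add, Matrix.smul_mul, Matrix.mul_smul, one_mul, mul_one, h2]
  module

lemma span_pow (R : M2) (h2 : R * R = 1) (α β : ℂ) (n : ℕ) :
    (α • 1 + β • R) ^ n
      = (((α+β)^n + (α-β)^n)/2) • 1 + (((α+β)^n - (α-β)^n)/2) • R := by
  induction n with
  | zero => norm_num
  | succ n ih =>
    rw [pow_succ, ih, span_mul R h2]
    congr 1
    · congr 1; ring
    · congr 1; ring

lemma span_indep (R : M2) (h2 : R * R = 1) (hd : R.det = -1) {c e c' e' : ℂ}
    (h : c • 1 + e • R = c' • 1 + e' • R) : c = c' ∧ e = e' := by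
  obtain ⟨ht, h1⟩ := refl_entries R h2 hd
  have f00 := congrFun (congrFun h 0) 0
  have f01 := congrFun (congrFun h 0) 1
  have f10 := congrFun (congrFun h 1) 0
  have f11 := congrFun (congrFun h 1) 1
  simp [Matrix.one_apply] at f00 f01 f10 f11
  have he : e = e' := by
    rcases f01 with h'|hq
    · exact h'
    rcases f10 with h'|hs
    · exact h'
    have hp : R 0 0 * R 0 0 = 1 := by
      linear_combination h1 - (R 1 0) * hq - 0 * hs - (R 0 1) * hs + (R 1 0) * hq
    have hp0 : R 0 0 ≠ 0 := by
      intro h0; rw [h0] at hp; norm_num at hp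
    have key : (e - e') * R 0 0 = 0 := by
      linear_combination (f00 - f11) / 2 + ((e - e') / 2) * ht
    rcases mul_eq_zero.mp key with h'|h'
    · linear_combination h'
    · exact absurd h' hp0
  refine ⟨?_, he⟩
  linear_combination f00 - (R 0 0) * he

lemma span_det (R : M2) (h2 : R * R = 1) (hd : R.det = -1) (α β : ℂ) :
    (α • 1 + β • R).det = α * α - β * β := by
  obtain ⟨ht, h1⟩ := refl_entries R h2 hd
  rw [det_fin_two]
  simp [Matrix.one_apply]
  linear_combination (α*β - β*β*(R 0 0)) * ht - β*β*h1 + 2*β*β*(R 0 0) * ht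

lemma span_of_commute (R U : M2) (h2 : R * R = 1) (hd : R.det = -1)
    (hc : U * R = R * U) : ∃ α β : ℂ, U = α • 1 + β • R := by
  obtain ⟨ht, h1⟩ := refl_entries R h2 hd
  have c00 := congrFun (congrFun hc 0) 0
  have c01 := congrFun (congrFun hc 0) 1
  have c10 := congrFun (congrFun hc 1) 0
  simp [Matrix.mul_apply, Fin.sum_univ_two] at c00 c01 c10
  -- helper to prove matrix equality entrywise
  have entry : ∀ α β : ℂ,
      U 0 0 = α + β * R 0 0 → U 0 1 = β * R 0 1 → U 1 0 = β * R 1 0 →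
      U 1 1 = α + β * R 1 1 → U = α • 1 + β • R := by
    intro α β e0 e1 e2 e3
    ext i j
    fin_cases i <;> fin_cases j <;>
      simp [Matrix.one_apply, e0, e1, e2, e3]
  by_cases hq : R 0 1 ≠ 0
  · refine ⟨U 0 0 - (U 0 1 / R 0 1) * R 0 0, U 0 1 / R 0 1, entry _ _ (by ring) ?_ ?_ ?_⟩
    · field_simp
    · field_simp
      linear_combination -c00
    · field_simp
      linear_combination -c01
  push_neg at hq
  by_cases hs : R 1 0 ≠ 0
  · have hp : R 0 0 * R 0 0 = 1 := by linear_combination h1 - (R 1 0) * hq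
    have hp0 : R 0 0 ≠ 0 := fun h0 => by rw [h0] at hp; norm_num at hp
    have hb : U 0 1 = 0 := by
      have : 2 * R 0 0 * U 0 1 = 0 := by
        linear_combination -c01 + (U 0 0 - U 1 1) * hq + (U 0 1) * ht
      rcases mul_eq_zero.mp this with h'|h'
      · rcases mul_eq_zero.mp h' with h''|h''
        · norm_num at h''
        · exact absurd h'' hp0
      · exact h'
    refine ⟨U 0 0 - (U 1 0 / R 1 0) * R 0 0, U 1 0 / R 1 0, entry _ _ (by ring) ?_ ?_ ?_⟩
    · rw [hb, hq, mul_zero]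
    · field_simp
    · field_simp
      linear_combination c10
  push_neg at hs
  · have hp : R 0 0 * R 0 0 = 1 := by linear_combination h1 - (R 0 1) * hs
    have hp0 : R 0 0 ≠ 0 := fun h0 => by rw [h0] at hp; norm_num at hp
    have hb : U 0 1 = 0 := by
      have : 2 * R 0 0 * U 0 1 = 0 := by
        linear_combination -c01 + (U 0 0 - U 1 1) * hq + (U 0 1) * ht
      rcases mul_eq_zero.mp this with h'|h'
      · rcases mul_eq_zero.mp h' with h''|h''
        · norm_num at h''
        · exact absurd h'' hp0
      · exact h'
    have hcc : U 1 0 = 0 := by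
      have : 2 * R 0 0 * U 1 0 = 0 := by
        linear_combination c10 - (U 1 1 - U 0 0) * hs + (U 1 0) * ht
      rcases mul_eq_zero.mp this with h'|h'
      · rcases mul_eq_zero.mp h' with h''|h''
        · norm_num at h''
        · exact absurd h'' hp0
      · exact h'
    refine ⟨U 0 0 - ((U 0 0 - U 1 1)/(2 * R 0 0)) * R 0 0, (U 0 0 - U 1 1)/(2 * R 0 0),
      entry _ _ (by ring) ?_ ?_ ?_⟩
    · rw [hb, hq, mul_zero]
    · rw [hcc, hs, mul_zero]
    · rw [ht]
      field_simp
      ring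

lemma conj_eq_iff {G : Type*} [Group G] (a b g : G) :
    a * g * a⁻¹ = b * g * b⁻¹ ↔ g * (a⁻¹ * b) = (a⁻¹ * b) * g := by
  constructor <;> intro h
  · have := congrArg (fun z => a⁻¹ * z * b) h
    simp only [mul_assoc, inv_mul_cancel_left, inv_mul_cancel, mul_one] at this ⊢
    exact this
  · have := congrArg (fun z => a * z * b⁻¹) h
    simp only [mul_assoc, mul_inv_cancel_left, mul_inv_cancel, mul_one] at this ⊢
    exact this


set_option maxHeartbeats 1000000 in
/-- There is no subgroup `W` of `GL₂(ℂ)` of order 48 whose center has order 2 and which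
is generated by a conjugacy class of `W` consisting of exactly six reflections
(a reflection being an element `r` with `r² = 1` and `det r = -1`). -/
theorem no_order48_reflection_group_in_GL2C :
    ¬ ∃ (W : Subgroup (GL (Fin 2) ℂ)) (C : Set (GL (Fin 2) ℂ)),
      Nat.card W = 48 ∧
      Nat.card (Subgroup.center ↥W) = 2 ∧
      C ⊆ (W : Set (GL (Fin 2) ℂ)) ∧
      C.ncard = 6 ∧
      (∀ r ∈ C, r ^ 2 = 1 ∧ Matrix.det (r : Matrix (Fin 2) (Fin 2) ℂ) = -1) ∧
      (∀ w ∈ W, ∀ r ∈ C, w * r * w⁻¹ ∈ C) ∧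
      (∀ r ∈ C, ∀ s ∈ C, ∃ w ∈ W, w * r * w⁻¹ = s) ∧
      Subgroup.closure C = W := by
  rintro ⟨W, C, hcard, hcent, hCW, hC6, hrefl, hconj, htrans, hclos⟩
  -- every element of W has determinant ±1
  have hdet : ∀ v : GL (Fin 2) ℂ, v ∈ W → (v : M2).det = 1 ∨ (v : M2).det = -1 := by
    let S : Subgroup (GL (Fin 2) ℂ) :=
      { carrier := {x | (x : M2).det = 1 ∨ (x : M2).det = -1}
        one_mem' := by left; simp
        mul_mem' := by
          rintro a b ha hb
          simp only [Set.mem_setOf_eq, Units.val_mul, Matrix.det_mul] at *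
          rcases ha with ha | ha <;> rcases hb with hb | hb <;> rw [ha, hb] <;> norm_num
        inv_mem' := by
          intro a ha
          simp only [Set.mem_setOf_eq] at *
          have key : (↑a : M2).det * (↑a⁻¹ : M2).det = 1 := by
            rw [← Matrix.det_mul, ← Units.val_mul, mul_inv_cancel, Units.val_one, Matrix.det_one]
          rcases ha with ha | ha
          · left; rw [ha, one_mul] at key; exact key
          · right; rw [ha] at key; linear_combination -key }
    have hWS : W ≤ S := by
      rw [← hclos]
      exact (Subgroup.closure_le S).mpr (fun c hc => Or.inr (hrefl c hc).2)
    exact fun v hv => hWS hv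
  -- scalar elements of W square to one
  have hscalar : ∀ v : GL (Fin 2) ℂ, v ∈ W → ∀ lam : ℂ, (v : M2) = lam • 1 → lam * lam = 1 := by
    intro v hv lam hlam
    have hvc : (⟨v, hv⟩ : ↥W) ∈ Subgroup.center ↥W := by
      rw [Subgroup.mem_center_iff]
      intro g
      have hg : (↑g : GL (Fin 2) ℂ) * v = v * ↑g := by
        apply Units.ext
        rw [Units.val_mul, Units.val_mul, hlam, Matrix.smul_mul, Matrix.mul_smul, one_mul, mul_one]
      exact Subtype.ext (by push_cast; exact hg)
    have hz := pow_card_eq_one' (x := (⟨⟨v, hv⟩, hvc⟩ : Subgroup.center ↥W))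
    rw [hcent] at hz
    have hv2 : v ^ 2 = 1 := by
      have := congrArg (fun t : Subgroup.center ↥W => ((t : ↥W) : GL (Fin 2) ℂ)) hz
      push_cast at this
      exact this
    have hm : (v : M2) * v = 1 := by
      have := congrArg Units.val hv2
      simpa [sq] using this
    rw [hlam, Matrix.smul_mul, Matrix.mul_smul, smul_smul, one_mul] at hm
    have := congrFun (congrFun hm 0) 0
    simpa [Matrix.one_apply] using this
  -- pick a reflection r in C
  obtain ⟨r, hr⟩ : C.Nonempty := by
    apply Set.nonempty_of_ncard_ne_zero; rw [hC6]; norm_num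
  have hrW : r ∈ W := hCW hr
  have hR2 : (r : M2) * r = 1 := by
    have := congrArg Units.val (hrefl r hr).1
    simpa [sq] using this
  have hRd : (r : M2).det = -1 := (hrefl r hr).2
  -- the key pointwise classification of centralizing elements
  have key : ∀ v : GL (Fin 2) ℂ, v ∈ W → r * v = v * r → v ^ 8 = 1 →
      v = r ∨ v = -r ∨ v = 1 ∨ v = -1 := by
    intro v hvW hvr hv8
    have hcm : (v : M2) * r = (r : M2) * v := by
      have := congrArg Units.val hvr
      simpa using this.symm
    obtain ⟨α, β, hU⟩ := span_of_commute (r : M2) (v : M2) hR2 hRd hcm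
    have hv8' : ((v : M2)) ^ 8 = 1 := by
      have := congrArg Units.val hv8
      simpa using this
    rw [hU, span_pow _ hR2] at hv8'
    obtain ⟨hA, hB⟩ := span_indep _ hR2 hRd
      (hv8'.trans (show (1 : M2) = (1:ℂ) • 1 + (0:ℂ) • (r : M2) by simp))
    have hx8 : (α+β)^8 = 1 := by linear_combination hA + hB
    have hy8 : (α-β)^8 = 1 := by linear_combination hA - hB
    have hx0 : α + β ≠ 0 := by
      intro h; rw [h] at hx8; norm_num at hx8
    have hdetv := hdet v hvW
    rw [hU, span_det _ hR2 hRd] at hdetv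
    have hxy2 : ((α+β)*(α-β)) * ((α+β)*(α-β)) = 1 := by
      rcases hdetv with h | h
      · linear_combination (α*α - β*β + 1) * h
      · linear_combination (α*α - β*β - 1) * h
    have hx4 : (α+β)^4 = 1 ∨ (α+β)^4 = -1 :=
      mul_self_eq_one_iff.mp (by linear_combination hx8)
    rcases hx4 with hx4 | hx4
    · -- y² = x²
      have h1 : (((α-β) - (α+β)) * ((α-β) + (α+β))) * ((α+β)*(α+β)) = 0 := by
        linear_combination hxy2 - hx4
      have hx2 : (α+β)*(α+β) = 1 ∨ (α+β)*(α+β) = -1 :=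
        mul_self_eq_one_iff.mp (by linear_combination hx4)
      rcases mul_eq_zero.mp h1 with h' | h'
      swap
      · exact absurd (mul_self_eq_zero.mp h') hx0
      rcases mul_eq_zero.mp h' with h'' | h''
      · -- y = x hence β = 0, v = α • 1
        have hβ : β = 0 := by linear_combination -h''/2
        subst hβ
        rw [add_zero] at hx2
        have hU' : (v : M2) = α • 1 := by rw [hU]; simp
        rcases hx2 with hx2 | hx2
        · rcases mul_self_eq_one_iff.mp hx2 with hα | hα <;> subst hα
          · right; right; left
            exact Units.ext (by rw [hU']; simp)
          · right; right; right
            exact Units.ext (by rw [hU']; simp)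
        · have := hscalar v hvW α hU'
          rw [hx2] at this
          norm_num at this
      · -- y = -x hence α = 0, v = β • r
        have hα : α = 0 := by linear_combination h''/2
        subst hα
        rw [zero_add] at hx2
        have hU' : (v : M2) = β • (r : M2) := by rw [hU]; simp
        rcases hx2 with hx2 | hx2
        · rcases mul_self_eq_one_iff.mp hx2 with hβ | hβ <;> subst hβ
          · left
            exact Units.ext (by rw [hU']; simp)
          · right; left
            exact Units.ext (by rw [hU', Units.val_neg]; simp)
        · have hw : ((v * r : GL (Fin 2) ℂ) : M2) = β • 1 := by
            rw [Units.val_mul, hU', Matrix.smul_mul, hR2]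
          have := hscalar (v * r) (mul_mem hvW hrW) β hw
          rw [hx2] at this
          norm_num at this
    · -- x⁴ = -1 : then v² = x² • r and v²r is a scalar with square -1
      exfalso
      have h1 : ((α-β)*(α-β) + (α+β)*(α+β)) * ((α+β)*(α+β)) = 0 := by
        linear_combination hxy2 + hx4
      have hy2 : (α-β)*(α-β) = -((α+β)*(α+β)) := by
        rcases mul_eq_zero.mp h1 with h' | h'
        · linear_combination h'
        · exact absurd (mul_self_eq_zero.mp h') hx0
      have hv2 : ((v : M2)) ^ 2 = ((α+β)*(α+β)) • (r : M2) := by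
        rw [hU, span_pow _ hR2]
        rw [show ((α+β)^2 + (α-β)^2)/2 = 0 by linear_combination hy2/2,
          show ((α+β)^2 - (α-β)^2)/2 = (α+β)*(α+β) by linear_combination -hy2/2]
        simp
      have hw : ((v * v * r : GL (Fin 2) ℂ) : M2) = ((α+β)*(α+β)) • 1 := by
        rw [Units.val_mul, Units.val_mul, (pow_two ((v : M2))).symm, hv2,
          Matrix.smul_mul, hR2]
      have hsq := hscalar (v * v * r) (mul_mem (mul_mem hvW hvW) hrW) _ hw
      have : (1:ℂ) = -1 := by linear_combination hx4 - hsq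
      norm_num at this
  -- orbit-stabilizer: the centralizer H of r in W has order 8
  let H : Subgroup ↥W := Subgroup.comap W.subtype (Subgroup.centralizer {r})
  have hmemH : ∀ w : ↥W, w ∈ H ↔ r * ↑w = ↑w * r := by
    intro w
    rw [Subgroup.mem_comap, Subgroup.mem_centralizer_singleton_iff]
    exact eq_comm
  let f : ↥W → ↥C := fun w =>
    ⟨(w : GL (Fin 2) ℂ) * r * ((w : GL (Fin 2) ℂ))⁻¹, hconj (w : GL (Fin 2) ℂ) w.2 r hr⟩
  have hf : ∀ w₁ w₂ : ↥W, f w₁ = f w₂ ↔ w₁⁻¹ * w₂ ∈ H := by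
    intro w₁ w₂
    rw [Subtype.ext_iff, hmemH]
    show (↑w₁ : GL (Fin 2) ℂ) * r * (↑w₁)⁻¹ = ↑w₂ * r * (↑w₂)⁻¹ ↔ _
    rw [conj_eq_iff]
    rw [show ((↑(w₁⁻¹ * w₂) : GL (Fin 2) ℂ)) = (↑w₁)⁻¹ * ↑w₂ from rfl]
  have hquot : Nat.card (↥W ⧸ H) = 6 := by
    have e : (↥W ⧸ H) ≃ ↥C := by
      apply Equiv.ofBijective (Quotient.lift f
        (fun a b hab => (hf a b).mpr (QuotientGroup.leftRel_apply.mp hab)))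
      constructor
      · intro q₁ q₂
        refine Quotient.inductionOn₂ q₁ q₂ (fun a b h => ?_)
        exact Quotient.sound (QuotientGroup.leftRel_apply.mpr ((hf a b).mp h))
      · rintro ⟨s, hs⟩
        obtain ⟨w, hwW, hw⟩ := htrans r hr s hs
        exact ⟨⟦⟨w, hwW⟩⟧, Subtype.ext hw⟩
    rw [Nat.card_congr e, Nat.card_coe_set_eq, hC6]
  have hH8 : Nat.card ↥H = 8 := by
    have := Subgroup.card_eq_card_quotient_mul_card_subgroup H
    rw [hcard, hquot] at this
    omega
  -- but H embeds into {r, -r, 1, -1}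
  have hmemT : ∀ u : ↥H, ((↑u : ↥W) : GL (Fin 2) ℂ) ∈ ({r, -r, 1, -1} : Set (GL (Fin 2) ℂ)) := by
    intro u
    have h8 : ((↑u : ↥W) : GL (Fin 2) ℂ) ^ 8 = 1 := by
      have := pow_card_eq_one' (x := u)
      rw [hH8] at this
      have := congrArg (fun t : ↥H => ((↑t : ↥W) : GL (Fin 2) ℂ)) this
      push_cast at this
      exact this
    rcases key ((u : ↥H) : GL (Fin 2) ℂ) ((u : ↥W)).2 ((hmemH (u : ↥W)).mp u.2) h8 with h | h | h | h <;> simp [h]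
  have hinj : Function.Injective
      (fun u : ↥H => (⟨((u : ↥W) : GL (Fin 2) ℂ), hmemT u⟩ : ↥({r, -r, 1, -1} : Set (GL (Fin 2) ℂ)))) := by
    intro u v huv
    have h1 := Subtype.ext_iff.mp huv
    exact Subtype.ext (Subtype.ext h1)
  have hfin : ({r, -r, 1, -1} : Set (GL (Fin 2) ℂ)).Finite :=
    (((Set.finite_singleton _).insert _).insert _).insert _
  haveI := hfin.to_subtype
  have hle := Nat.card_le_card_of_injective _ hinj
  rw [hH8, Nat.card_coe_set_eq] at hle
  have h1 := Set.ncard_insert_le r ({-r, 1, -1} : Set (GL (Fin 2) ℂ))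
  have h2 := Set.ncard_insert_le (-r) ({1, -1} : Set (GL (Fin 2) ℂ))
  have h3 := Set.ncard_insert_le (1 : GL (Fin 2) ℂ) ({-1} : Set (GL (Fin 2) ℂ))
  rw [Set.ncard_singleton] at h3
  omega
end

section
/- Let G be a group of order 8 and let u ∈ G be an element with u ≠ 1 such that g² = u for every g ∈ G with g ∉ {1, u}. Then G is isomorphic to the quaternion group Q₈ of order 8. -/
/-- A group of order 8 containing an element `u ≠ 1` such that every element outside
`{1, u}` squares to `u` is isomorphic to the quaternion group `Q₈`. -/
theorem quaternion_of_squares_eq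
    {G : Type*} [Group G] (h8 : Nat.card G = 8) (u : G) (hu : u ≠ 1)
    (hsq : ∀ g : G, g ∉ ({1, u} : Set G) → g ^ 2 = u) :
    Nonempty (G ≃* QuaternionGroup 2) := by
  have hGfin : Finite G := Nat.finite_of_card_ne_zero (by omega)
  -- u ^ 2 = 1
  have hu2 : u ^ 2 = 1 := by
    by_cases h : u ^ 2 ∈ ({1, u} : Set G)
    · rcases h with h | h
      · exact h
      · simp only [Set.mem_singleton_iff, pow_two] at h
        exact absurd (mul_left_cancel (by rw [mul_one]; exact h : u * u = u * 1)) hu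
    · have h4 : u ^ 4 = u := by
        have h2 := hsq _ h
        calc u ^ 4 = (u ^ 2) ^ 2 := by rw [← pow_mul]
        _ = u := h2
      have h3' : u ^ 3 = 1 := by
        have : u * u ^ 3 = u * 1 := by rw [mul_one, ← pow_succ']; exact h4
        exact mul_left_cancel this
      have hd3 : orderOf u ∣ 3 := orderOf_dvd_of_pow_eq_one h3'
      have hd8 : orderOf u ∣ 8 := by rw [← h8]; exact orderOf_dvd_natCard u
      have h1 : orderOf u ∣ 1 := (Nat.dvd_gcd hd3 hd8).trans (by norm_num)
      rw [Nat.dvd_one, orderOf_eq_one_iff] at h1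
      exact absurd h1 hu
  have horder : ∀ g : G, g ∉ ({1, u} : Set G) → orderOf g = 4 := by
    intro g hg
    have hg2 : g ^ 2 = u := hsq g hg
    have hg4 : g ^ 4 = 1 := by
      calc g ^ 4 = (g ^ 2) ^ 2 := by rw [← pow_mul]
      _ = 1 := by rw [hg2]; exact hu2
    have hg1 : g ≠ 1 := fun h => hg (Or.inl h)
    have hgne : g ^ 2 ≠ 1 := by rw [hg2]; exact hu
    have hg3 : g ^ 3 ≠ 1 := by
      intro h
      apply hg1
      have : g ^ 3 * g = 1 := by rw [← pow_succ]; exact hg4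
      rw [h, one_mul] at this
      exact this
    rw [orderOf_eq_iff (by norm_num)]
    refine ⟨hg4, ?_⟩
    intro m hm hm'
    interval_cases m
    · simpa using hg1
    · exact hgne
    · exact hg3
  -- pick i outside {1, u}
  have hex : ∃ g : G, g ∉ ({1, u} : Set G) := by
    by_contra hc
    push_neg at hc
    have huniv : (Set.univ : Set G) ⊆ {1, u} := fun g _ => hc g
    have : Nat.card G ≤ 2 := by
      have h1 := Set.ncard_le_ncard huniv (Set.toFinite _)
      rw [Set.ncard_univ] at h1
      exact h1.trans ((Set.ncard_insert_le _ _).trans (by simp))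
    omega
  obtain ⟨i, hi⟩ := hex
  have hi4 : orderOf i = 4 := horder i hi
  have hiu : i ^ 2 = u := hsq i hi
  -- pick j outside zpowers i
  have hjex : ∃ j : G, j ∉ Subgroup.zpowers i := by
    by_contra hc
    push_neg at hc
    have htop : Subgroup.zpowers i = ⊤ := by
      ext x; simp [hc x]
    have hcard : Nat.card (Subgroup.zpowers i) = 8 := by
      rw [htop, ← h8]
      exact Nat.card_congr Subgroup.topEquiv.toEquiv
    rw [Nat.card_zpowers, hi4] at hcard
    omega
  obtain ⟨j, hj⟩ := hjex
  have hj' : j ∉ ({1, u} : Set G) := by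
    rintro (h | h)
    · exact hj (h ▸ Subgroup.one_mem _)
    · simp only [Set.mem_singleton_iff] at h
      exact hj (h ▸ hiu ▸ Subgroup.pow_mem _ (Subgroup.mem_zpowers i) 2)
  have hju : j ^ 2 = u := hsq j hj'
  -- the key relation i * j = j * i⁻¹
  have hij : i * j = j * i⁻¹ := by
    have hijout : i * j ∉ ({1, u} : Set G) := by
      rintro (h | h)
      · have hji : j = i⁻¹ := by
          rw [eq_inv_iff_mul_eq_one]
          calc j * i = i⁻¹ * (i * j) * i := by group
          _ = i⁻¹ * 1 * i := by rw [h]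
          _ = 1 := by group
        exact hj (hji ▸ Subgroup.inv_mem _ (Subgroup.mem_zpowers i))
      · simp only [Set.mem_singleton_iff] at h
        rw [← hiu, pow_two] at h
        have hji : j = i := mul_left_cancel h
        exact hj (hji ▸ Subgroup.mem_zpowers i)
    have h1 : (i * j) ^ 2 = j ^ 2 := by rw [hsq _ hijout, hju]
    have h3 : i * j * i = j := by
      apply mul_right_cancel (b := j)
      calc i * j * i * j = (i * j) ^ 2 := by rw [pow_two]; group
      _ = j ^ 2 := h1
      _ = j * j := pow_two j
    calc i * j = (i * j * i) * i⁻¹ := by group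
    _ = j * i⁻¹ := by rw [h3]
  -- powers of i commute past j
  have hcomm : ∀ m : ℕ, i ^ m * j = j * (i ^ m)⁻¹ := by
    intro m
    induction m with
    | zero => simp
    | succ k ih =>
      calc i ^ (k + 1) * j = i ^ k * (i * j) := by rw [pow_succ]; group
      _ = i ^ k * j * i⁻¹ := by rw [hij]; group
      _ = j * (i ^ k)⁻¹ * i⁻¹ := by rw [ih]
      _ = j * (i ^ (k + 1))⁻¹ := by rw [pow_succ]; group
  -- arithmetic of exponents
  have f_add : ∀ k l : ZMod 4, i ^ (k + l).val = i ^ k.val * i ^ l.val := by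
    intro k l
    have h := pow_mod_orderOf i (k.val + l.val)
    rw [hi4] at h
    rw [ZMod.val_add, h, pow_add]
  have f_sub : ∀ k l : ZMod 4, i ^ (k - l).val = i ^ k.val * (i ^ l.val)⁻¹ := by
    intro k l
    have h := f_add (k - l) l
    rw [sub_add_cancel] at h
    rw [h]
    group
  have f_two : i ^ (((2 : ℕ) : ZMod 4)).val = u := by
    rw [show (((2 : ℕ) : ZMod 4)).val = 2 from rfl]
    exact hiu
  -- define the homomorphism Q8 → G
  let φfun : QuaternionGroup 2 → G := fun x =>
    match x with
    | QuaternionGroup.a k => i ^ k.val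
    | QuaternionGroup.xa k => j * i ^ k.val
  have hmul : ∀ x y : QuaternionGroup 2, φfun (x * y) = φfun x * φfun y := by
    rintro (k | k) (l | l)
    · exact f_add k l
    · show j * i ^ (l - k).val = i ^ k.val * (j * i ^ l.val)
      rw [f_sub l k,
        show i ^ k.val * (j * i ^ l.val) = j * (i ^ k.val)⁻¹ * i ^ l.val from by
          rw [← mul_assoc, hcomm k.val]]
      group
    · show j * i ^ (k + l).val = j * i ^ k.val * i ^ l.val
      rw [f_add]
      group
    · show i ^ (((2 : ℕ) : ZMod 4) + l - k).val = j * i ^ k.val * (j * i ^ l.val)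
      rw [f_sub (((2 : ℕ) : ZMod 4) + l) k, f_add (((2 : ℕ) : ZMod 4)) l, f_two, ← hju,
        show j * i ^ k.val * (j * i ^ l.val) = j * (i ^ k.val * j) * i ^ l.val from by group,
        hcomm k.val, pow_two j]
      group
  let φ : QuaternionGroup 2 →* G := MonoidHom.mk' φfun hmul
  have hinj : Function.Injective φ := by
    rw [injective_iff_map_eq_one]
    rintro (k | k) hk
    · have hk' : i ^ k.val = 1 := hk
      have hdvd := orderOf_dvd_of_pow_eq_one hk'
      rw [hi4] at hdvd
      have hlt : k.val < 4 := k.val_lt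
      have hv0 : k.val = 0 := by omega
      have hk0 : k = 0 := by
        rwa [ZMod.val_eq_zero] at hv0
      rw [hk0]
      rfl
    · exfalso
      have hk' : j * i ^ k.val = 1 := hk
      have hji : j = (i ^ k.val)⁻¹ := by
        rw [eq_inv_iff_mul_eq_one]; exact hk'
      exact hj (hji ▸ Subgroup.inv_mem _ (Subgroup.pow_mem _ (Subgroup.mem_zpowers i) _))
  have hcard : Nat.card (QuaternionGroup 2) = Nat.card G := by
    rw [h8, Nat.card_eq_fintype_card, QuaternionGroup.card]
  have hbij : Function.Bijective φ :=
    (Nat.bijective_iff_injective_and_card φ).mpr ⟨hinj, hcard⟩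
  exact ⟨(MulEquiv.ofBijective φ hbij).symm⟩
end

section
/- If f is an injective group homomorphism from the quaternion group Q₈ of order 8 into GL₂(ℂ), then f maps the unique element of order 2 of Q₈ to the scalar matrix −1 (the negative of the identity matrix). -/
/-!
The image of the central involution `z = a 2` is an involution `m` of `GL₂(ℂ)` commuting with the
whole image of `Q₈`. If `m ≠ -1`, then `m` is not scalar (a scalar `c` with `c² = 1` is `±1`, and
`m ≠ 1` by faithfulness). A non-scalar `2 × 2` matrix `m` has a commutative centralizer: anything
commuting with it is of the form `a + b m`. So the image of `Q₈` would be abelian, which it is not.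
-/

theorem exists_eq_smul_of_forall_mul_eq_mul {K ι : Type*} [Field K] {u v : ι → K} (hu : u ≠ 0)
    (huv : ∀ i j, u i * v j = u j * v i) : ∃ t : K, v = t • u := by
  obtain ⟨k, hk⟩ := Function.ne_iff.mp hu
  refine ⟨v k / u k, funext fun i => ?_⟩
  rw [Pi.smul_apply, smul_eq_mul, div_mul_eq_mul_div, eq_div_iff hk]
  linear_combination huv k i

namespace Matrix

variable {K : Type*} [Field K]

theorem exists_eq_scalar_add_smul_of_commute {m α : Matrix (Fin 2) (Fin 2) K}
    (hm : ∀ c : K, m ≠ scalar (Fin 2) c) (hα : Commute m α) :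
    ∃ a b : K, α = scalar (Fin 2) a + b • m := by
  -- The commutation relations say that these two vectors are proportional.
  set u : Fin 3 → K := ![m 0 1, m 1 0, m 0 0 - m 1 1]
  set v : Fin 3 → K := ![α 0 1, α 1 0, α 0 0 - α 1 1]
  have hu : u ≠ 0 := by
    intro hu
    have h0 := congrFun hu 0; have h1 := congrFun hu 1; have h2 := congrFun hu 2
    simp only [Fin.isValue, cons_val_zero, Pi.zero_apply, cons_val_one, cons_val, u] at h0 h1 h2
    refine hm (m 1 1) (ext fun i j => ?_)
    fin_cases i <;> fin_cases j <;> simp [h0, h1, sub_eq_zero.mp h2]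
  have huv : ∀ i j, u i * v j = u j * v i := by
    have h := congrFun₂ hα.eq
    have h00 := h 0 0; have h01 := h 0 1; have h10 := h 1 0
    simp only [mul_apply, Fin.sum_univ_two] at h00 h01 h10
    intro i j
    fin_cases i <;> fin_cases j <;>
      simp only [Fin.zero_eta, Fin.mk_one, Fin.reduceFinMk, cons_val_zero, cons_val_one, cons_val,
        u, v] <;> grind
  obtain ⟨t, ht⟩ := exists_eq_smul_of_forall_mul_eq_mul hu huv
  have h0 := congrFun ht 0; have h1 := congrFun ht 1; have h2 := congrFun ht 2
  simp only [Fin.isValue, cons_val_zero, Pi.smul_apply, smul_eq_mul, cons_val_one, cons_val,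
    v, u] at h0 h1 h2
  refine ⟨α 1 1 - t * m 1 1, t, ext fun i j => ?_⟩
  fin_cases i <;> fin_cases j <;> simp [h0, h1]
  linear_combination h2

theorem commute_of_commute_of_forall_ne_scalar {m α β : Matrix (Fin 2) (Fin 2) K}
    (hm : ∀ c : K, m ≠ scalar (Fin 2) c) (hα : Commute m α) (hβ : Commute m β) :
    Commute α β := by
  obtain ⟨a, b, rfl⟩ := exists_eq_scalar_add_smul_of_commute hm hα
  obtain ⟨c, d, rfl⟩ := exists_eq_scalar_add_smul_of_commute hm hβ
  have hm_comm : Commute m (scalar (Fin 2) c + d • m) :=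
    (scalar_commute c (Commute.all c) m).symm.add_right ((Commute.refl m).smul_right d)
  exact (scalar_commute a (Commute.all a) _).add_left (hm_comm.smul_left b)

theorem ne_scalar_of_mul_self_eq_one {n : Type*} [Fintype n] [DecidableEq n] [Nonempty n]
    {m : Matrix n n K} (hm : m * m = 1) (h1 : m ≠ 1) (hn1 : m ≠ -1) (c : K) :
    m ≠ scalar n c := by
  rintro rfl
  rw [← map_mul, ← (scalar n).map_one, scalar_inj, mul_self_eq_one_iff] at hm
  rcases hm with rfl | rfl
  · exact h1 (scalar n).map_one
  · exact hn1 (by simp [← diagonal_neg])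

theorem GeneralLinearGroup.map_eq_neg_one_of_orderOf_eq_two_of_mem_center {G : Type*} [Group G]
    {f : G →* GL (Fin 2) K} (hf : Function.Injective f) {z : G} (hz : orderOf z = 2)
    (hzc : z ∈ Subgroup.center G) {x y : G} (hxy : ¬Commute x y) : f z = -1 := by
  by_contra hne
  have hz2 : z ^ 2 = 1 := hz ▸ pow_orderOf_eq_one z
  have hz1 : z ≠ 1 := by rintro rfl; simp at hz
  have hsq : (f z : Matrix (Fin 2) (Fin 2) K) * f z = 1 := by
    rw [← Units.val_mul, ← map_mul, ← sq, hz2, map_one, Units.val_one]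
  have h1 : (f z : Matrix (Fin 2) (Fin 2) K) ≠ 1 := fun h =>
    hz1 (hf ((Units.ext (h.trans Units.val_one.symm)).trans (map_one f).symm))
  have hn1 : (f z : Matrix (Fin 2) (Fin 2) K) ≠ -1 := fun h => hne (Units.ext h)
  have hcomm (g : G) : Commute (f z : Matrix (Fin 2) (Fin 2) K) (f g) :=
    Commute.units_val_iff.mpr <|
      (show Commute z g from (Subgroup.mem_center_iff.mp hzc g).symm).map f
  exact hxy <| (Commute.units_val_iff.mp <| commute_of_commute_of_forall_ne_scalar
    (ne_scalar_of_mul_self_eq_one hsq h1 hn1) (hcomm x) (hcomm y)).of_map hf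

end Matrix

namespace QuaternionGroup

theorem a_n_mem_center (n : ℕ) : a (n : ZMod (2 * n)) ∈ Subgroup.center (QuaternionGroup n) := by
  refine Subgroup.mem_center_iff.mpr fun g => ?_
  rcases g with i | j
  · rw [a_mul_a, a_mul_a, add_comm]
  · have h : (n : ZMod (2 * n)) = -n := by
      rw [eq_neg_iff_add_eq_zero, ← two_mul]; exact_mod_cast ZMod.natCast_self (2 * n)
    rw [xa_mul_a, a_mul_xa, sub_eq_add_neg, ← h]

theorem orderOf_eq_two_iff (g : QuaternionGroup 2) : orderOf g = 2 ↔ g = a 2 := by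
  rw [orderOf_eq_prime_iff]
  revert g; decide

theorem not_commute_a_one_xa_zero : ¬Commute (a 1 : QuaternionGroup 2) (xa 0) := by
  unfold Commute SemiconjBy; decide

end QuaternionGroup

open QuaternionGroup in
/-- Any injective group homomorphism from the quaternion group `Q₈` into `GL₂(ℂ)` sends
the unique element of order 2 of `Q₈` to the scalar matrix `-1`. -/
theorem faithful_Q8_rep_sends_involution_to_neg_one
    (f : QuaternionGroup 2 →* GL (Fin 2) ℂ) (hf : Function.Injective f) :
    (∃! g : QuaternionGroup 2, orderOf g = 2) ∧
    ∀ g : QuaternionGroup 2, orderOf g = 2 → f g = -1 := by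
  refine ⟨⟨a 2, (orderOf_eq_two_iff _).mpr rfl, fun g => (orderOf_eq_two_iff g).mp⟩, ?_⟩
  intro g hg
  obtain rfl := (orderOf_eq_two_iff g).mp hg
  have hcenter : a 2 ∈ Subgroup.center (QuaternionGroup 2) := by
    simpa using a_n_mem_center 2
  exact Matrix.GeneralLinearGroup.map_eq_neg_one_of_orderOf_eq_two_of_mem_center hf hg hcenter
    not_commute_a_one_xa_zero
end

section
/- Let G be a group, let t be an automorphism of G with t ∘ t = id, and let K be a subgroup of G such that every element of K commutes with every element of t(K). Then every element g of the subgroup K·t(K) satisfying t(g) = g can be written in the form g = x·t(x)·c for some x ∈ K and some c ∈ K ∩ t(K). -/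
/-- Let `t` be an involutive automorphism of a group `G` and let `K ≤ G` be a subgroup
every element of which commutes with every element of `t(K)`.  Then every `t`-fixed
element `g` of the subgroup `K·t(K)` can be written as `g = x · t(x) · c` with `x ∈ K`
and `c ∈ K ∩ t(K)`. -/
theorem fixed_points_in_diagonal
    {G : Type*} [Group G] (t : G ≃* G) (ht : ∀ g : G, t (t g) = g)
    (K : Subgroup G)
    (hcomm : ∀ x ∈ K, ∀ y ∈ K.map t.toMonoidHom, Commute x y) :
    ∀ g : G, (∃ a ∈ K, ∃ b ∈ K.map t.toMonoidHom, g = a * b) → t g = g →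
      ∃ x ∈ K, ∃ c ∈ K ⊓ K.map t.toMonoidHom, g = x * t x * c := by
  rintro g ⟨a, ha, b, hb, rfl⟩ hfix
  obtain ⟨b0, hb0, rfl⟩ := hb
  simp only [MulEquiv.coe_toMonoidHom] at *
  -- key equation from t-fixedness
  have heq : t a * b0 = a * t b0 := by
    have := hfix
    rw [map_mul, ht] at this
    exact this
  have hta : Commute a (t a) := hcomm a ha (t a) ⟨a, ha, rfl⟩
  -- c = a⁻¹ * b0 is t-fixed
  have hc_fix : t (a⁻¹ * b0) = a⁻¹ * b0 := by
    have h1 : t (a⁻¹ * b0) = (t a)⁻¹ * t b0 := by rw [map_mul, map_inv]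
    have h2 : t b0 = a⁻¹ * (t a * b0) := by rw [heq]; group
    rw [h1, h2]
    have := hta.inv_right.eq
    calc (t a)⁻¹ * (a⁻¹ * (t a * b0)) = ((t a)⁻¹ * a⁻¹ * t a) * b0 := by group
      _ = (a⁻¹ * (t a)⁻¹ * t a) * b0 := by rw [hta.inv_inv.eq]
      _ = a⁻¹ * b0 := by group
  refine ⟨a, ha, a⁻¹ * b0, ⟨K.mul_mem (K.inv_mem ha) hb0, ⟨a⁻¹ * b0,
    K.mul_mem (K.inv_mem ha) hb0, hc_fix⟩⟩, ?_⟩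
  calc a * t b0 = a * (a⁻¹ * (t a * b0)) := by rw [heq]; group
    _ = t a * b0 := by group
    _ = a * t a * (a⁻¹ * b0) := by
        rw [show a * t a = t a * a from hta.eq]; group
end
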